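/- arXiv:1910.06557 — 4 statements merged into one kernel-verified Lean document; each statement's English description precedes it below -/
import Mathlib

section
/- Let $V$ be a $3$-dimensional oriented real inner product space and $W \subset V$ a $2$-dimensional linear subspace. Then every linear map $L : W \to V$ can be uniquely written as $L = A + S$, where $A : W \to W$ is self-adjoint (as an endomorphism of $W$ with the induced inner product, followed by the inclusion $W \subset V$) and $S : W \to V$ has the form $S(w) = v \times w$ for some fixed $v \in V$, where $\times$ is the cross product of $V$. -/
/-!
If `A w + v ⨯₃ w = 0` on `W` with `A` self-adjoint, then `A w ⬝ᵥ w = -(v ⨯₃ w) ⬝ᵥ w = 0`,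
so `A = 0` by polarization, and then `v ⨯₃ w = 0` for two independent `w` forces `v = 0`.
Hence `(A, v) ↦ A + v ⨯₃ ·` is injective. On a plane, self-adjointness is a single linear
condition on `W →ₗ W` (an alternating form on a plane is fixed by its value on one basis
pair), and `4 + 3 = 2 * 3 + 1` turns injectivity into bijectivity.
-/

open Matrix Module

section DotSymmetric

variable {K ι : Type*} [Field K] [Fintype ι] {W : Submodule K (ι → K)}

def IsDotSymmetric (A : W →ₗ[K] W) : Prop :=
  ∀ x y : W, (A x : ι → K) ⬝ᵥ y = (x : ι → K) ⬝ᵥ A y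

def symmetryDefect (x y : W) : (W →ₗ[K] W) →ₗ[K] K where
  toFun A := (A x : ι → K) ⬝ᵥ y - (x : ι → K) ⬝ᵥ A y
  map_add' A B := by
    simp only [LinearMap.add_apply, Submodule.coe_add, add_dotProduct, dotProduct_add]; ring
  map_smul' c A := by
    simp only [LinearMap.smul_apply, Submodule.coe_smul, smul_dotProduct, dotProduct_smul,
      smul_eq_mul, RingHom.id_apply]
    ring

lemma IsDotSymmetric.symmetryDefect_eq_zero {A : W →ₗ[K] W} (hA : IsDotSymmetric A) (x y : W) :
    symmetryDefect x y A = 0 :=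
  sub_eq_zero.2 (hA x y)

lemma isDotSymmetric_of_symmetryDefect_basis_eq_zero (e : Basis (Fin 2) K W) {A : W →ₗ[K] W}
    (h : symmetryDefect (e 0) (e 1) A = 0) : IsDotSymmetric A := by
  replace h : (A (e 0) : ι → K) ⬝ᵥ e 1 = (e 0 : ι → K) ⬝ᵥ A (e 1) := sub_eq_zero.1 h
  intro x y
  rw [← e.sum_repr x, ← e.sum_repr y]
  simp only [Fin.sum_univ_two, map_add, map_smul, Submodule.coe_add, Submodule.coe_smul,
    add_dotProduct, dotProduct_add, smul_dotProduct, dotProduct_smul, smul_eq_mul]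
  have hcomm (i j : Fin 2) : (e i : ι → K) ⬝ᵥ A (e j) = (A (e j) : ι → K) ⬝ᵥ e i :=
    dotProduct_comm _ _
  simp only [hcomm] at h ⊢
  linear_combination (e.repr x 0 * e.repr y 1 - e.repr x 1 * e.repr y 0) * h

lemma IsDotSymmetric.eq_zero_of_forall_dotProduct_self [LinearOrder K] [IsStrictOrderedRing K]
    {A : W →ₗ[K] W} (hA : IsDotSymmetric A) (h : ∀ x : W, (A x : ι → K) ⬝ᵥ x = 0) :
    A = 0 := by
  ext x : 1
  have hpolar := h (x + A x)
  simp only [map_add, Submodule.coe_add, add_dotProduct, dotProduct_add, h, hA (A x) x,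
    zero_add, add_zero] at hpolar
  have : (A x : ι → K) ⬝ᵥ A x = 0 := by linear_combination hpolar / 2
  exact Subtype.ext (dotProduct_self_eq_zero.1 this)

end DotSymmetric

section CrossProduct

variable {K : Type*} [Field K]

lemma eq_zero_of_cross_eq_zero_of_cross_ne_zero {v a b : Fin 3 → K} (hab : a ⨯₃ b ≠ 0)
    (ha : v ⨯₃ a = 0) (hb : v ⨯₃ b = 0) : v = 0 := by
  have ha0 : a ≠ 0 := by rintro rfl; simp at hab
  have hdep : ¬LinearIndependent K ![a, v] := by
    rw [← crossProduct_ne_zero_iff_linearIndependent, ← cross_anticomm, ha, neg_zero, not_not]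
  obtain ⟨c, rfl⟩ : ∃ c : K, c • a = v := by
    simpa [LinearIndependent.pair_iff' ha0] using hdep
  rw [map_smul, LinearMap.smul_apply, smul_eq_zero] at hb
  rw [hb.resolve_right hab, zero_smul]

lemma eq_zero_of_forall_mem_cross_eq_zero {W : Submodule K (Fin 3 → K)} (e : Basis (Fin 2) K W)
    {v : Fin 3 → K} (h : ∀ w ∈ W, v ⨯₃ w = 0) : v = 0 := by
  have hli : LinearIndependent K ![(e 0 : Fin 3 → K), e 1] := by
    have hfun : W.subtype ∘ e = ![(e 0 : Fin 3 → K), e 1] := by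
      ext i : 1; fin_cases i <;> rfl
    simpa only [hfun] using e.linearIndependent.map' W.subtype W.ker_subtype
  exact eq_zero_of_cross_eq_zero_of_cross_ne_zero
    (crossProduct_ne_zero_iff_linearIndependent.2 hli) (h _ (e 0).2) (h _ (e 1).2)

end CrossProduct

section Decomposition

variable {K : Type*} [Field K] {W : Submodule K (Fin 3 → K)} (e : Basis (Fin 2) K W)

/-- The coordinate `symmetryDefect (e 0) (e 1) A` vanishes exactly on self-adjoint `A` and
balances dimensions: source and target both have dimension 7. -/
noncomputable def crossDecompositionMap :
    (W →ₗ[K] W) × (Fin 3 → K) →ₗ[K] (W →ₗ[K] Fin 3 → K) × K :=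
  ((LinearMap.llcomp K W W _ W.subtype).coprod
      (LinearMap.lcomp K _ W.subtype ∘ₗ crossProduct)).prod
    (symmetryDefect (e 0) (e 1) ∘ₗ LinearMap.fst K _ _)

lemma crossDecompositionMap_apply (A : W →ₗ[K] W) (v : Fin 3 → K) :
    crossDecompositionMap e (A, v) =
      (W.subtype ∘ₗ A + crossProduct v ∘ₗ W.subtype, symmetryDefect (e 0) (e 1) A) := rfl

lemma crossDecompositionMap_injective [LinearOrder K] [IsStrictOrderedRing K] :
    Function.Injective (crossDecompositionMap e) := by
  refine (injective_iff_map_eq_zero _).2 ?_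
  rintro ⟨A, v⟩ hAv
  rw [crossDecompositionMap_apply, Prod.mk_eq_zero] at hAv
  obtain ⟨hsum, hdefect⟩ := hAv
  have hAw (w : W) : (A w : Fin 3 → K) = -(v ⨯₃ w) :=
    eq_neg_of_add_eq_zero_left (LinearMap.congr_fun hsum w)
  have hA0 : A = 0 :=
    (isDotSymmetric_of_symmetryDefect_basis_eq_zero e hdefect).eq_zero_of_forall_dotProduct_self
      fun w => by rw [hAw, neg_dotProduct, dotProduct_comm, dot_cross_self, neg_zero]
  have hv0 : v = 0 := eq_zero_of_forall_mem_cross_eq_zero e fun w hw => by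
    have h := hAw ⟨w, hw⟩
    rwa [hA0, LinearMap.zero_apply, ZeroMemClass.coe_zero, zero_eq_neg] at h
  simp [hA0, hv0]

lemma crossDecompositionMap_bijective [LinearOrder K] [IsStrictOrderedRing K] :
    Function.Bijective (crossDecompositionMap e) := by
  have hinj := crossDecompositionMap_injective e
  have hdim : finrank K ((W →ₗ[K] W) × (Fin 3 → K)) =
      finrank K ((W →ₗ[K] Fin 3 → K) × K) := by
    rw [finrank_prod, finrank_prod, finrank_linearMap, finrank_linearMap,
      finrank_eq_card_basis e]
    simp
  exact ⟨hinj, (LinearMap.injective_iff_surjective_of_finrank_eq_finrank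
    (V := (W →ₗ[K] W) × (Fin 3 → K)) (V₂ := (W →ₗ[K] Fin 3 → K) × K) hdim).1 hinj⟩

end Decomposition

/-- A–S decomposition of a linear map: let `V = ℝ³` with its standard
inner product `dot` and orientation (so that `crossProduct` is the associated cross
product), and let `W ⊆ V` be a 2-dimensional subspace.  Every linear map `L : W → V`
decomposes uniquely as `L = A + S` with `A : W → W` self-adjoint (for the induced inner
product, followed by the inclusion `W ⊆ V`) and `S = (v × ·)` for a fixed `v ∈ V`. -/
theorem exists_unique_selfAdjoint_cross_decomposition
    (W : Submodule ℝ (Fin 3 → ℝ)) (hW : Module.finrank ℝ W = 2)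
    (L : W →ₗ[ℝ] (Fin 3 → ℝ)) :
    ∃! p : (W →ₗ[ℝ] W) × (Fin 3 → ℝ),
      (∀ x y : W, ∑ i, (p.1 x : Fin 3 → ℝ) i * (y : Fin 3 → ℝ) i
          = ∑ i, (x : Fin 3 → ℝ) i * (p.1 y : Fin 3 → ℝ) i) ∧
      (∀ w : W, L w = (p.1 w : Fin 3 → ℝ) + crossProduct p.2 (w : Fin 3 → ℝ)) := by
  let e := finBasisOfFinrankEq ℝ W hW
  obtain ⟨hinj, hsurj⟩ := crossDecompositionMap_bijective e
  obtain ⟨⟨A, v⟩, hAv⟩ := hsurj (L, 0)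
  obtain ⟨hL, hdefect⟩ := Prod.mk.inj hAv
  have hA : IsDotSymmetric A := isDotSymmetric_of_symmetryDefect_basis_eq_zero e hdefect
  refine ⟨(A, v), ⟨hA, fun w => by rw [← hL]; rfl⟩, ?_⟩
  rintro ⟨B, u⟩ ⟨hB, hBL⟩
  apply hinj
  rw [hAv, crossDecompositionMap_apply, IsDotSymmetric.symmetryDefect_eq_zero (A := B) hB]
  exact congrArg (·, 0) (LinearMap.ext fun w => (hBL w).symm)
end

section
/- For $\epsilon \ge 0$ let $n_\epsilon(t_1,t_2) = \sqrt{\epsilon^2 + t_1^2} + \sqrt{\epsilon^2 + t_2^2}$ on $\Omega = \{(t_1,t_2) : 0 \le t_1 \le t_2\}$. If $(t_1,t_2), (t_1',t_2') \in \Omega$ satisfy $t_2 \le t_2'$ and $t_1 + t_2 \le t_1' + t_2'$, then $n_\epsilon(t_1,t_2) \le n_\epsilon(t_1',t_2')$. -/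
/-!
Write `f t = √(ε² + t²)`, the norm of `ε + t i`: it is convex on `ℝ` and increasing on `[0, ∞)`.
The hypotheses say that `(t₁, t₂)` is weakly submajorized by `(t₁', t₂')`, and sums of a convex
increasing function respect weak submajorization. For two points: if `t₁ ≤ t₁'` compare termwise;
otherwise `t₁' < t₁ ≤ t₂ < t₂'`, the secant slope of `f` over `[t₁', t₁]` is at most the one over
`[t₂, t₂']`, which is nonnegative, and `t₁ - t₁' ≤ t₂' - t₂`.
-/

open Set

/-- The regularized norm function `n_ε(t₁,t₂) = √(ε² + t₁²) + √(ε² + t₂²)`. -/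
noncomputable def nEps (ε : ℝ) (p : ℝ × ℝ) : ℝ :=
  Real.sqrt (ε ^ 2 + p.1 ^ 2) + Real.sqrt (ε ^ 2 + p.2 ^ 2)

section Convex

variable {𝕜 : Type*} [Field 𝕜] [LinearOrder 𝕜] [IsStrictOrderedRing 𝕜] {s : Set 𝕜} {f : 𝕜 → 𝕜}

theorem ConvexOn.secant_le_secant (hf : ConvexOn 𝕜 s f) {a b c d : 𝕜} (ha : a ∈ s) (hd : d ∈ s)
    (hab : a < b) (hcd : c < d) (hac : a ≤ c) (hbd : b ≤ d) :
    (f b - f a) / (b - a) ≤ (f d - f c) / (d - c) := by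
  have hb : b ∈ s := hf.1.ordConnected.out ha hd ⟨hab.le, hbd⟩
  have hc : c ∈ s := hf.1.ordConnected.out ha hd ⟨hac, hcd.le⟩
  calc (f b - f a) / (b - a)
      ≤ (f d - f a) / (d - a) :=
        hf.secant_mono ha hb hd hab.ne' (hab.trans_le hbd).ne' hbd
    _ = (f a - f d) / (a - d) := by rw [← neg_div_neg_eq, neg_sub, neg_sub]
    _ ≤ (f c - f d) / (c - d) :=
        hf.secant_mono hd ha hc (hab.trans_le hbd).ne hcd.ne hac
    _ = (f d - f c) / (d - c) := by rw [← neg_div_neg_eq, neg_sub, neg_sub]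

theorem ConvexOn.add_le_add_of_le_of_add_le (hf : ConvexOn 𝕜 s f) (hmono : MonotoneOn f s)
    {x₁ x₂ y₁ y₂ : 𝕜} (hx₁ : x₁ ∈ s) (hy₁ : y₁ ∈ s) (hy₂ : y₂ ∈ s) (hx : x₁ ≤ x₂) (h₂ : x₂ ≤ y₂)
    (hsum : x₁ + x₂ ≤ y₁ + y₂) : f x₁ + f x₂ ≤ f y₁ + f y₂ := by
  have hx₂ : x₂ ∈ s := hf.1.ordConnected.out hx₁ hy₂ ⟨hx, h₂⟩
  rcases le_or_gt x₁ y₁ with h₁ | h₁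
  · exact add_le_add (hmono hx₁ hy₁ h₁) (hmono hx₂ hy₂ h₂)
  have hlt₂ : x₂ < y₂ := by linarith
  have hslope := hf.secant_le_secant hy₁ hy₂ h₁ hlt₂ (h₁.le.trans hx) (hx.trans h₂)
  have hslope_nonneg : 0 ≤ (f y₂ - f x₂) / (y₂ - x₂) :=
    div_nonneg (sub_nonneg.2 (hmono hx₂ hy₂ h₂)) (sub_nonneg.2 h₂)
  suffices f x₁ - f y₁ ≤ f y₂ - f x₂ by linarith
  calc f x₁ - f y₁ = (f x₁ - f y₁) / (x₁ - y₁) * (x₁ - y₁) :=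
        (div_mul_cancel₀ _ (sub_pos.2 h₁).ne').symm
    _ ≤ (f y₂ - f x₂) / (y₂ - x₂) * (x₁ - y₁) := mul_le_mul_of_nonneg_right hslope (sub_pos.2 h₁).le
    _ ≤ (f y₂ - f x₂) / (y₂ - x₂) * (y₂ - x₂) :=
        mul_le_mul_of_nonneg_left (by linarith) hslope_nonneg
    _ = f y₂ - f x₂ := div_mul_cancel₀ _ (sub_pos.2 hlt₂).ne'

end Convex

theorem convexOn_sqrt_sq_add_sq (ε : ℝ) : ConvexOn ℝ univ fun t : ℝ => √(ε ^ 2 + t ^ 2) := by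
  have h := (convexOn_norm (E := ℂ) convex_univ).comp_affineMap
    (AffineMap.lineMap (ε : ℂ) (ε + Complex.I))
  have hf : (fun t : ℝ => √(ε ^ 2 + t ^ 2)) = norm ∘ AffineMap.lineMap (ε : ℂ) (ε + Complex.I) := by
    ext t
    simp [AffineMap.lineMap_apply, Complex.norm_add_mul_I, add_comm]
  rwa [hf, ← preimage_univ]

theorem monotoneOn_sqrt_sq_add_sq (ε : ℝ) : MonotoneOn (fun t : ℝ => √(ε ^ 2 + t ^ 2)) (Ici 0) :=
  fun _ hs _ _ hst => Real.sqrt_le_sqrt (by gcongr)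

theorem nEps_mono_general (ε : ℝ) (t₁ t₂ t₁' t₂' : ℝ)
    (h₁ : 0 ≤ t₁) (h₂ : t₁ ≤ t₂) (h₁' : 0 ≤ t₁')
    (ha : t₂ ≤ t₂') (hb : t₁ + t₂ ≤ t₁' + t₂') :
    nEps ε (t₁, t₂) ≤ nEps ε (t₁', t₂') :=
  ((convexOn_sqrt_sq_add_sq ε).subset (subset_univ _) (convex_Ici 0)).add_le_add_of_le_of_add_le
    (monotoneOn_sqrt_sq_add_sq ε) h₁ h₁' (h₁.trans (h₂.trans ha) : (0 : ℝ) ≤ t₂') h₂ ha hb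

/-- for `ε ≥ 0` and `(t₁,t₂), (t₁',t₂') ∈ Ω = {0 ≤ t₁ ≤ t₂}` with
`t₂ ≤ t₂'` and `t₁ + t₂ ≤ t₁' + t₂'`, we have `n_ε(t₁,t₂) ≤ n_ε(t₁',t₂')`. -/
theorem nEps_mono (ε : ℝ) (hε : 0 ≤ ε) (t₁ t₂ t₁' t₂' : ℝ)
    (h₁ : 0 ≤ t₁) (h₂ : t₁ ≤ t₂) (h₁' : 0 ≤ t₁') (h₂' : t₁' ≤ t₂')
    (ha : t₂ ≤ t₂') (hb : t₁ + t₂ ≤ t₁' + t₂') :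
    nEps ε (t₁, t₂) ≤ nEps ε (t₁', t₂') :=
  nEps_mono_general ε t₁ t₂ t₁' t₂' h₁ h₂ h₁' ha hb
end

section
/- Let $V, W$ be real inner product spaces of dimensions $2$ and $3$, and for $\epsilon \ge 0$ define $q_\epsilon(L) := \mathrm{tr}\sqrt{\epsilon^2 I + L^* L}$ on $\mathrm{Hom}(V,W)$. Then $q_\epsilon$ is a convex function, i.e. $q_\epsilon(\lambda L + (1-\lambda) L') \le \lambda q_\epsilon(L) + (1-\lambda) q_\epsilon(L')$ for all $L, L' \in \mathrm{Hom}(V,W)$ and $\lambda \in [0,1]$. -/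
/-!
Stacking `εI` on top of `L` gives a matrix `M = [εI; L]` with `Mᴴ M = ε²I + Lᴴ L`, so `q_ε(L)` is
the trace norm `tr √(Mᴴ M)` of `M`, and `L ↦ M` is affine. The trace norm is convex because it is
the maximum of the linear functionals `M ↦ tr (Xᴴ M)` over contractions `Xᴴ X ≤ 1`: the maximum
is attained at the polar factor `U` of `M = U √(Mᴴ M)`, and every other value is bounded by the
AM-GM inequality for the semi-inner product `⟨X, Y⟩ = tr (Xᴴ Y √(Mᴴ M))`, applied to `X` and `U`.
-/


open Matrix

/-- `ε²·1 + Lᴴ L` is positive semidefinite. -/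
theorem eps_sq_one_add_conjTranspose_mul_self_posSemidef (ε : ℝ)
    (L : Matrix (Fin 3) (Fin 2) ℝ) :
    (ε ^ 2 • (1 : Matrix (Fin 2) (Fin 2) ℝ) + Lᴴ * L).PosSemidef := by
  have h1 := Matrix.posSemidef_conjTranspose_mul_self (ε • (1 : Matrix (Fin 2) (Fin 2) ℝ))
  have h2 := Matrix.posSemidef_conjTranspose_mul_self L
  have he : (ε • (1 : Matrix (Fin 2) (Fin 2) ℝ))ᴴ * (ε • (1 : Matrix (Fin 2) (Fin 2) ℝ))
      = ε ^ 2 • (1 : Matrix (Fin 2) (Fin 2) ℝ) := by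
    simp [Matrix.smul_mul, Matrix.mul_smul, smul_smul, sq]
  rw [he] at h1
  exact h1.add h2

/-- The regularized 1-Schatten norm `q_ε(L) = tr √(ε²·1 + Lᴴ L)`. -/
noncomputable def qEps (ε : ℝ) (L : Matrix (Fin 3) (Fin 2) ℝ) : ℝ :=
  ((eps_sq_one_add_conjTranspose_mul_self_posSemidef ε L).1.eigenvectorUnitary.1 *
    diagonal ((RCLike.ofReal : ℝ → ℝ) ∘ (√·) ∘ (eps_sq_one_add_conjTranspose_mul_self_posSemidef ε L).1.eigenvalues) *
    (star (eps_sq_one_add_conjTranspose_mul_self_posSemidef ε L).1.eigenvectorUnitary :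
      Matrix (Fin 2) (Fin 2) ℝ)).trace

open scoped MatrixOrder

namespace Matrix

variable {m n : Type*} [Fintype m] [Fintype n] [DecidableEq n]

theorem trace_mul_nonneg {A B : Matrix n n ℝ} (hA : 0 ≤ A) (hB : 0 ≤ B) :
    0 ≤ (A * B).trace := by
  have hC : (CFC.sqrt B)ᴴ = CFC.sqrt B := (CFC.sqrt_nonneg B).isSelfAdjoint
  rw [← CFC.sqrt_mul_sqrt_self B hB, ← mul_assoc, trace_mul_comm, ← mul_assoc]
  nth_rw 1 [← hC]
  exact (nonneg_iff_posSemidef.mp hA).conjTranspose_mul_mul_same _ |>.trace_nonneg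

theorem trace_mul_le_trace {A R : Matrix n n ℝ} (hA : A ≤ 1) (hR : 0 ≤ R) :
    (A * R).trace ≤ R.trace := by
  have := trace_mul_nonneg (sub_nonneg.mpr hA) hR
  rwa [sub_mul, one_mul, trace_sub, sub_nonneg] at this

theorem two_mul_trace_conjTranspose_mul_mul_le (X Y : Matrix m n ℝ) {R : Matrix n n ℝ}
    (hR : 0 ≤ R) :
    2 * (Xᴴ * Y * R).trace ≤ (Xᴴ * X * R).trace + (Yᴴ * Y * R).trace := by
  have hsymm : (Yᴴ * X * R).trace = (Xᴴ * Y * R).trace := by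
    rw [← star_trivial (Yᴴ * X * R).trace, ← trace_conjTranspose, conjTranspose_mul,
      conjTranspose_mul, conjTranspose_conjTranspose, IsHermitian.eq hR.isSelfAdjoint,
      trace_mul_comm]
  have := trace_mul_nonneg (posSemidef_conjTranspose_mul_self (X - Y)).nonneg hR
  simp only [conjTranspose_sub, Matrix.sub_mul, Matrix.mul_sub, trace_sub] at this
  linarith

theorem conjTranspose_mul_cfc_mul_mul_cfc (M : Matrix m n ℝ) (f g : ℝ → ℝ) :
    (M * cfc f (Mᴴ * M))ᴴ * (M * cfc g (Mᴴ * M)) = cfc (fun x => f x * x * g x) (Mᴴ * M) := by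
  have hS : IsSelfAdjoint (Mᴴ * M) := (posSemidef_conjTranspose_mul_self M).isHermitian
  have hf : (cfc f (Mᴴ * M))ᴴ = cfc f (Mᴴ * M) := IsSelfAdjoint.cfc
  have hcont (h : ℝ → ℝ) : ContinuousOn h (spectrum ℝ (Mᴴ * M)) :=
    (Mᴴ * M).finite_spectrum.continuousOn h
  rw [cfc_mul _ _ _ (hcont _) (hcont g), cfc_mul _ _ _ (hcont f) (hcont _), cfc_id' ℝ _,
    conjTranspose_mul, hf]
  simp only [Matrix.mul_assoc]

noncomputable def traceNorm (M : Matrix m n ℝ) : ℝ :=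
  (cfc Real.sqrt (Mᴴ * M)).trace

/-- The partial isometry `U` of the polar decomposition `M = U √(Mᴴ M)`; the convention
`(√0)⁻¹ = 0` makes it vanish on the kernel of `M`. -/
noncomputable def polarFactor (M : Matrix m n ℝ) : Matrix m n ℝ :=
  M * cfc (fun x => (√x)⁻¹) (Mᴴ * M)

theorem polarFactor_conjTranspose_mul_self_le_one (M : Matrix m n ℝ) :
    (polarFactor M)ᴴ * polarFactor M ≤ 1 := by
  rw [polarFactor, conjTranspose_mul_cfc_mul_mul_cfc]
  refine cfc_le_one _ _ fun x _ => ?_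
  rw [inv_mul_eq_div, Real.div_sqrt]
  exact mul_inv_le_one

theorem polarFactor_conjTranspose_mul (M : Matrix m n ℝ) :
    (polarFactor M)ᴴ * M = cfc Real.sqrt (Mᴴ * M) := by
  have hS : IsSelfAdjoint (Mᴴ * M) := (posSemidef_conjTranspose_mul_self M).isHermitian
  have h := conjTranspose_mul_cfc_mul_mul_cfc M (fun x => (√x)⁻¹) (fun _ => 1)
  simpa only [polarFactor, cfc_const_one ℝ _ hS, Matrix.mul_one, inv_mul_eq_div,
    Real.div_sqrt, mul_one] using h

theorem polarFactor_mul_cfc_sqrt (M : Matrix m n ℝ) :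
    polarFactor M * cfc Real.sqrt (Mᴴ * M) = M := by
  have hS : 0 ≤ Mᴴ * M := (posSemidef_conjTranspose_mul_self M).nonneg
  have hcont (h : ℝ → ℝ) : ContinuousOn h (spectrum ℝ (Mᴴ * M)) :=
    (Mᴴ * M).finite_spectrum.continuousOn h
  set k : ℝ → ℝ := fun x => 1 - (√x)⁻¹ * √x
  have hk : M - polarFactor M * cfc Real.sqrt (Mᴴ * M) = M * cfc k (Mᴴ * M) := by
    rw [polarFactor, Matrix.mul_assoc, ← cfc_mul _ _ _ (hcont _) (hcont _),
      cfc_sub _ _ _ (hcont _) (hcont _), cfc_const_one ℝ _ hS.isSelfAdjoint, Matrix.mul_sub,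
      Matrix.mul_one]
  have hgram : (M * cfc k (Mᴴ * M))ᴴ * (M * cfc k (Mᴴ * M)) = 0 := by
    rw [conjTranspose_mul_cfc_mul_mul_cfc, ← cfc_const_zero ℝ (Mᴴ * M)]
    refine cfc_congr fun x hx => ?_
    rcases (spectrum_nonneg_of_nonneg hS hx).eq_or_lt with rfl | hx
    · simp
    · simp [k, inv_mul_cancel₀ (Real.sqrt_pos.mpr hx).ne']
  rw [eq_comm, ← sub_eq_zero, hk, ← conjTranspose_mul_self_eq_zero, hgram]

theorem traceNorm_eq_trace_polarFactor (M : Matrix m n ℝ) :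
    traceNorm M = ((polarFactor M)ᴴ * M).trace := by
  rw [traceNorm, polarFactor_conjTranspose_mul]

theorem trace_conjTranspose_mul_le_traceNorm {X : Matrix m n ℝ} (hX : Xᴴ * X ≤ 1)
    (M : Matrix m n ℝ) : (Xᴴ * M).trace ≤ traceNorm M := by
  have hR : 0 ≤ cfc Real.sqrt (Mᴴ * M) := cfc_nonneg fun x _ => Real.sqrt_nonneg x
  have h := two_mul_trace_conjTranspose_mul_mul_le X (polarFactor M) hR
  rw [Matrix.mul_assoc Xᴴ, polarFactor_mul_cfc_sqrt] at h
  have hX' := trace_mul_le_trace hX hR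
  have hP := trace_mul_le_trace (polarFactor_conjTranspose_mul_self_le_one M) hR
  rw [traceNorm]
  linarith

theorem traceNorm_convexOn : ConvexOn ℝ Set.univ (traceNorm : Matrix m n ℝ → ℝ) := by
  refine ⟨convex_univ, fun M₁ _ M₂ _ a b ha hb _ => ?_⟩
  set X := polarFactor (a • M₁ + b • M₂)
  have hX : Xᴴ * X ≤ 1 := polarFactor_conjTranspose_mul_self_le_one _
  calc traceNorm (a • M₁ + b • M₂)
      = a * (Xᴴ * M₁).trace + b * (Xᴴ * M₂).trace := by
        rw [traceNorm_eq_trace_polarFactor, Matrix.mul_add, Matrix.mul_smul, Matrix.mul_smul,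
          trace_add, trace_smul, trace_smul, smul_eq_mul, smul_eq_mul]
    _ ≤ a * traceNorm M₁ + b * traceNorm M₂ := by
        gcongr <;> exact trace_conjTranspose_mul_le_traceNorm hX _

theorem traceNorm_fromRows_convexOn {m₁ m₂ : Type*} [Fintype m₁] [Fintype m₂]
    (A : Matrix m₁ n ℝ) :
    ConvexOn ℝ Set.univ fun L : Matrix m₂ n ℝ => traceNorm (fromRows A L) := by
  refine ⟨convex_univ, fun L₁ _ L₂ _ a b ha hb hab => ?_⟩
  have hrows : fromRows A (a • L₁ + b • L₂) = a • fromRows A L₁ + b • fromRows A L₂ := by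
    ext (i | i) j
    · simp [← add_mul, hab]
    · simp
  simpa only [hrows] using traceNorm_convexOn.2 trivial trivial ha hb hab

end Matrix

theorem qEps_eq_traceNorm_fromRows (ε : ℝ) (L : Matrix (Fin 3) (Fin 2) ℝ) :
    qEps ε L = traceNorm (fromRows (ε • (1 : Matrix (Fin 2) (Fin 2) ℝ)) L) := by
  have hgram : ε ^ 2 • (1 : Matrix (Fin 2) (Fin 2) ℝ) + Lᴴ * L
      = (fromRows (ε • (1 : Matrix (Fin 2) (Fin 2) ℝ)) L)ᴴ
          * fromRows (ε • (1 : Matrix (Fin 2) (Fin 2) ℝ)) L := by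
    rw [conjTranspose_fromRows_eq_fromCols_conjTranspose, fromCols_mul_fromRows]
    simp [sq, smul_smul]
  rw [traceNorm, ← hgram, (eps_sq_one_add_conjTranspose_mul_self_posSemidef ε L).1.cfc_eq]
  rfl

theorem qEps_convexOn_general (ε : ℝ) :
    ConvexOn ℝ (Set.univ : Set (Matrix (Fin 3) (Fin 2) ℝ)) (qEps ε) := by
  rw [funext (qEps_eq_traceNorm_fromRows ε)]
  exact traceNorm_fromRows_convexOn _

/-- for `ε ≥ 0`, the regularized 1-Schatten norm `q_ε` is a convex
function on `Hom(V, W)`. -/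
theorem qEps_convexOn (ε : ℝ) (hε : 0 ≤ ε) :
    ConvexOn ℝ (Set.univ : Set (Matrix (Fin 3) (Fin 2) ℝ)) (qEps ε) :=
  qEps_convexOn_general ε
end

section
/- Let $V, W$ be real inner product spaces of dimensions $2$ and $3$. Let $L : V \to W$ be linear of rank $2$ and $A : W \to W$ nonnegative self-adjoint. Then the function $t \mapsto \|(I + tA) \circ L\|_1$ is differentiable at $t = 0$ with nonnegative derivative there; moreover the derivative at $0$ is strictly positive if $A \circ L \ne 0$. -/
open Matrix

/-- The 1-Schatten norm `‖L‖₁ = tr √(Lᴴ L)`. -/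
noncomputable def schatten1 {m n : ℕ} (L : Matrix (Fin n) (Fin m) ℝ) : ℝ :=
  ((((Matrix.posSemidef_conjTranspose_mul_self L).1.eigenvectorUnitary : Matrix (Fin m) (Fin m) ℝ) *
    diagonal (Real.sqrt ∘ (Matrix.posSemidef_conjTranspose_mul_self L).1.eigenvalues) *
    (star (Matrix.posSemidef_conjTranspose_mul_self L).1.eigenvectorUnitary : Matrix (Fin m) (Fin m) ℝ))).trace

/-!
For a positive semidefinite `2 × 2` matrix `M`, Cayley–Hamilton applied to `S = √M` gives
`(tr S)² = tr M + 2 det S`, hence `tr √M = √(tr M + 2 √(det M))`. Along the curve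
`M(t) = ((1 + tA)L)ᴴ(1 + tA)L = P + tQ + t²R`, with `P = LᴴL` positive definite (as `L` has
rank 2) and `Q = 2 LᴴAL` positive semidefinite, this expression is differentiable at `0` with
derivative `(tr Q + tr(adj P · Q) / √(det P)) / (2 √(tr P + 2 √(det P)))`. Both traces are
nonnegative since `adj P` and `Q` are positive semidefinite, and `tr Q = 0` forces `AL = 0`.
-/

open scoped MatrixOrder

namespace Matrix

theorem isUnit_of_rank_eq_card {n K : Type*} [Fintype n] [DecidableEq n] [Field K]
    {A : Matrix n n K} (h : A.rank = Fintype.card n) : IsUnit A := by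
  rw [← mulVec_surjective_iff_isUnit, ← coe_mulVecLin, ← LinearMap.range_eq_top]
  apply Submodule.eq_top_of_finrank_eq
  rw [Module.finrank_fintype_fun_eq_card, ← h, rank]

variable {n : Type*} [Fintype n]

theorem PosSemidef.trace_mul_nonneg {X Y : Matrix n n ℝ} (hX : X.PosSemidef) (hY : Y.PosSemidef) :
    0 ≤ (X * Y).trace := by
  classical
  obtain ⟨B, rfl⟩ := CStarAlgebra.nonneg_iff_eq_star_mul_self.mp hX.nonneg
  rw [Matrix.mul_assoc, trace_mul_comm, star_eq_conjTranspose]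
  exact (hY.mul_mul_conjTranspose_same B).trace_nonneg

theorem PosDef.adjugate [DecidableEq n] {P : Matrix n n ℝ} (hP : P.PosDef) : P.adjugate.PosDef := by
  have hadj : P.adjugate = P.det • P⁻¹ := by
    rw [inv_def, smul_smul, Ring.mul_inverse_cancel _ hP.det_pos.ne'.isUnit, one_smul]
  rw [hadj]
  exact hP.inv.smul hP.det_pos

theorem PosSemidef.conjTranspose_mul_mul_same_eq_zero_iff {m : Type*} {A : Matrix n n ℝ}
    (hA : A.PosSemidef) (L : Matrix n m ℝ) : Lᴴ * A * L = 0 ↔ A * L = 0 := by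
  classical
  obtain ⟨B, rfl⟩ := CStarAlgebra.nonneg_iff_eq_star_mul_self.mp hA.nonneg
  have hgram : Lᴴ * (star B * B) * L = (B * L)ᴴ * (B * L) := by
    simp only [conjTranspose_mul, star_eq_conjTranspose, Matrix.mul_assoc]
  rw [hgram, conjTranspose_mul_self_eq_zero, Matrix.mul_assoc]
  refine ⟨fun h => by rw [h, Matrix.mul_zero], fun h => ?_⟩
  rw [← conjTranspose_mul_self_eq_zero, ← hgram, Matrix.mul_assoc, Matrix.mul_assoc, h,
    Matrix.mul_zero]

theorem PosSemidef.trace_conjTranspose_mul_mul_same_pos {m : Type*} [Fintype m] {A : Matrix n n ℝ}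
    (hA : A.PosSemidef) {L : Matrix n m ℝ} (hAL : A * L ≠ 0) : 0 < (Lᴴ * A * L).trace := by
  have hLAL := hA.conjTranspose_mul_mul_same L
  refine hLAL.trace_nonneg.lt_of_ne' fun h => hAL ?_
  rwa [hLAL.trace_eq_zero_iff, hA.conjTranspose_mul_mul_same_eq_zero_iff] at h

theorem conjTranspose_mul_self_one_add_smul_mul {m : Type*} [DecidableEq n] {A : Matrix n n ℝ}
    (hA : A.IsHermitian) (L : Matrix n m ℝ) (t : ℝ) :
    ((1 + t • A) * L)ᴴ * ((1 + t • A) * L)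
      = Lᴴ * L + t • ((2 : ℝ) • (Lᴴ * A * L)) + t ^ 2 • (Lᴴ * (A * A) * L) := by
  simp only [conjTranspose_mul, conjTranspose_add, conjTranspose_smul, hA.eq,
    star_trivial, Matrix.add_mul, Matrix.mul_add, Matrix.smul_mul, Matrix.mul_smul, Matrix.one_mul,
    Matrix.mul_assoc]
  module

theorem trace_mul_self_add_two_det_fin_two {R : Type*} [CommRing R] (S : Matrix (Fin 2) (Fin 2) R) :
    (S * S).trace + 2 * S.det = S.trace ^ 2 := by
  simp only [trace_fin_two, det_fin_two, mul_apply, Fin.sum_univ_two]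
  ring

theorem trace_sqrt_fin_two {M : Matrix (Fin 2) (Fin 2) ℝ} (hM : M.PosSemidef) :
    (CFC.sqrt M).trace = √(M.trace + 2 * √M.det) := by
  have hS : (CFC.sqrt M).PosSemidef := (CFC.sqrt_nonneg M).posSemidef
  have hSS : CFC.sqrt M * CFC.sqrt M = M := CFC.sqrt_mul_sqrt_self M hM.nonneg
  conv_rhs => rw [← hSS]
  rw [det_mul, Real.sqrt_mul_self hS.det_nonneg, trace_mul_self_add_two_det_fin_two,
    Real.sqrt_sq hS.trace_nonneg]

end Matrix

theorem schatten1_eq_trace_sqrt {m n : ℕ} (N : Matrix (Fin n) (Fin m) ℝ) :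
    schatten1 N = (CFC.sqrt (Nᴴ * N)).trace := by
  have hM := posSemidef_conjTranspose_mul_self N
  rw [CFC.sqrt_eq_real_sqrt _ hM.nonneg, cfcₙ_eq_cfc (hf0 := Real.sqrt_zero), hM.1.cfc_eq,
    IsHermitian.cfc, Unitary.conjStarAlgAut_apply, RCLike.ofReal_real_eq_id, Function.id_comp]
  rfl

theorem hasDerivAt_quadratic (a b c : ℝ) : HasDerivAt (fun t : ℝ => a + t * b + t ^ 2 * c) b 0 := by
  have h := (((hasDerivAt_id' (0 : ℝ)).mul_const b).const_add a).add
    (((hasDerivAt_id' (0 : ℝ)).pow 2).mul_const c)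
  exact h.congr_deriv (by simp)

section QuadraticCurve

variable {n : Type*} (P Q R : Matrix n n ℝ)

theorem hasDerivAt_apply_add_smul_add_sq_smul (i j : n) :
    HasDerivAt (fun t : ℝ => (P + t • Q + t ^ 2 • R) i j) (Q i j) 0 := by
  simpa only [Matrix.add_apply, Matrix.smul_apply, smul_eq_mul] using
    hasDerivAt_quadratic (P i j) (Q i j) (R i j)

theorem hasDerivAt_trace_add_smul_add_sq_smul [Fintype n] :
    HasDerivAt (fun t : ℝ => (P + t • Q + t ^ 2 • R).trace) Q.trace 0 := by
  simpa only [trace_add, trace_smul, smul_eq_mul] using hasDerivAt_quadratic P.trace Q.trace R.trace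

end QuadraticCurve

theorem hasDerivAt_det_fin_two_add_smul_add_sq_smul (P Q R : Matrix (Fin 2) (Fin 2) ℝ) :
    HasDerivAt (fun t : ℝ => (P + t • Q + t ^ 2 • R).det) (P.adjugate * Q).trace 0 := by
  have h := hasDerivAt_apply_add_smul_add_sq_smul P Q R
  simp_rw [det_fin_two]
  refine (((h 0 0).mul (h 1 1)).sub ((h 0 1).mul (h 1 0))).congr_deriv ?_
  simp [adjugate_fin_two, trace_fin_two, vecMul, dotProduct, Fin.sum_univ_two]
  ring

theorem hasDerivAt_sqrt_trace_add_two_sqrt_det (P Q R : Matrix (Fin 2) (Fin 2) ℝ)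
    (hdet : 0 < P.det) (htr : 0 ≤ P.trace) :
    HasDerivAt
      (fun t : ℝ => √((P + t • Q + t ^ 2 • R).trace + 2 * √(P + t • Q + t ^ 2 • R).det))
      ((Q.trace + (P.adjugate * Q).trace / √P.det) / (2 * √(P.trace + 2 * √P.det))) 0 := by
  have hP : P + (0 : ℝ) • Q + (0 : ℝ) ^ 2 • R = P := by simp
  have hsqrtdet := (hasDerivAt_det_fin_two_add_smul_add_sq_smul P Q R).sqrt (by rw [hP]; exact hdet.ne')
  have hinner := (hasDerivAt_trace_add_smul_add_sq_smul P Q R).add (hsqrtdet.const_mul 2)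
  refine (hinner.sqrt ?_).congr_deriv ?_
  · simp only [Pi.add_apply, hP]
    positivity
  · simp only [Pi.add_apply, hP]
    field_simp

/-- for `L : V → W` of rank 2 (dim V = 2, dim W = 3) and `A : W → W`
nonnegative self-adjoint, `t ↦ ‖(I + tA) ∘ L‖₁` is differentiable at `t = 0` with
nonnegative derivative, strictly positive if `A ∘ L ≠ 0`. -/
theorem hasDerivAt_schatten1_nonneg
    (L : Matrix (Fin 3) (Fin 2) ℝ) (hL : L.rank = 2)
    (A : Matrix (Fin 3) (Fin 3) ℝ) (hA : A.PosSemidef) :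
    ∃ d : ℝ, HasDerivAt (fun t : ℝ => schatten1 ((1 + t • A) * L)) d 0 ∧
      0 ≤ d ∧ (A * L ≠ 0 → 0 < d) := by
  set P := Lᴴ * L
  set Q := (2 : ℝ) • (Lᴴ * A * L)
  have hP : P.PosDef := (posSemidef_conjTranspose_mul_self L).posDef_iff_isUnit.mpr
    (isUnit_of_rank_eq_card (by rw [rank_conjTranspose_mul_self, hL, Fintype.card_fin]))
  have hQ : Q.PosSemidef := (hA.conjTranspose_mul_mul_same L).smul zero_le_two
  have hcurve : (fun t : ℝ => schatten1 ((1 + t • A) * L)) = fun t =>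
      √((P + t • Q + t ^ 2 • (Lᴴ * (A * A) * L)).trace
        + 2 * √(P + t • Q + t ^ 2 • (Lᴴ * (A * A) * L)).det) := by
    funext t
    rw [schatten1_eq_trace_sqrt, trace_sqrt_fin_two (posSemidef_conjTranspose_mul_self _),
      conjTranspose_mul_self_one_add_smul_mul hA.1]
  have hadj : 0 ≤ (P.adjugate * Q).trace / √P.det :=
    div_nonneg (hP.adjugate.posSemidef.trace_mul_nonneg hQ) (Real.sqrt_nonneg _)
  have hdenom : 0 < 2 * √(P.trace + 2 * √P.det) := by
    have := hP.posSemidef.trace_nonneg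
    have := Real.sqrt_pos.mpr hP.det_pos
    positivity
  refine ⟨_, hcurve ▸ hasDerivAt_sqrt_trace_add_two_sqrt_det P Q _ hP.det_pos
    hP.posSemidef.trace_nonneg, div_nonneg (add_nonneg hQ.trace_nonneg hadj) hdenom.le,
    fun hAL => div_pos (add_pos_of_pos_of_nonneg ?_ hadj) hdenom⟩
  rw [trace_smul, smul_eq_mul]
  exact mul_pos two_pos (hA.trace_conjTranspose_mul_mul_same_pos hAL)
end
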